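/- Let Ω be a finite state space containing four distinct states ω_1, ω_2, ω_3, ω_4, and let X: Ω → ℝ satisfy X(ω_1) = a, X(ω_2) = d, X(ω_3) = b, X(ω_4) = d where (d − a)(d − b) > 0. Define Π_1 as the partition of Ω with cells {ω_1, ω_2}, {ω_3, ω_4} and singletons for all other states, and Π_2 with cells {ω_1, ω_4}, {ω_2, ω_3} and singletons elsewhere. Then for every ε > 0 there exist m ∈ (0, 1/2), p ∈ (0, 1 − 2m), and a prior μ given by μ(ω_1) = p, μ(ω_2) = m, μ(ω_3) = 1 − p − 2m, μ(ω_4) = m (and zero elsewhere), such that X is non-separable at μ under Π = (Π_1, Π_2) with a value v satisfying |v − d| < ε. -/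
import Mathlib


noncomputable section
open scoped Classical
open Finset

/-- A partition of `Ω` given by its cell map: `C ω` is the cell containing `ω`. -/
def IsPartitionFun {Ω : Type*} (C : Ω → Set Ω) : Prop :=
  (∀ ω, ω ∈ C ω) ∧ ∀ ω ω', ω' ∈ C ω → C ω' = C ω

/-- The fine-join property: the intersection of all traders' cells at `ω` is `{ω}`. -/
def FineJoin {Ω : Type*} {n : ℕ} (C : Fin n → Ω → Set Ω) : Prop :=
  ∀ ω ω', (∀ i, ω' ∈ C i ω) → ω' = ω

/-- A prior: a probability distribution on the finite state space. -/
def IsPrior {Ω : Type*} [Fintype Ω] (μ : Ω → ℝ) : Prop :=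
  (∀ ω, 0 ≤ μ ω) ∧ ∑ ω, μ ω = 1

/-- Support of a prior. -/
def suppSet {Ω : Type*} (μ : Ω → ℝ) : Set Ω := {ω | 0 < μ ω}

/-- Conditional expectation `E_μ[X | S]`. -/
def condExp {Ω : Type*} [Fintype Ω] (μ X : Ω → ℝ) (S : Set Ω) : ℝ :=
  (∑ ω, if ω ∈ S then μ ω * X ω else 0) / (∑ ω, if ω ∈ S then μ ω else 0)

/-- `X` is non-separable at prior `μ` with value `v` under the information structure `C`. -/
def NonSeparableAt {Ω : Type*} [Fintype Ω] {n : ℕ}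
    (C : Fin n → Ω → Set Ω) (X μ : Ω → ℝ) (v : ℝ) : Prop :=
  (∃ ω ∈ suppSet μ, X ω ≠ v) ∧
  ∀ (i : Fin n) (ω : Ω), ω ∈ suppSet μ → condExp μ X (C i ω) = v

/-- `X` is separable under the information structure `C`. -/
def SeparableSec {Ω : Type*} [Fintype Ω] {n : ℕ}
    (C : Fin n → Ω → Set Ω) (X : Ω → ℝ) : Prop :=
  ¬ ∃ (μ : Ω → ℝ) (v : ℝ), IsPrior μ ∧ NonSeparableAt C X μ v

/-- Arrow–Debreu security: pays `a` at one state, `b ≠ a` at all other states. -/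
def ArrowDebreu {Ω : Type*} (X : Ω → ℝ) : Prop :=
  ∃ (a b : ℝ) (ωs : Ω), a ≠ b ∧ X ωs = a ∧ ∀ ω, ω ≠ ωs → X ω = b

/-- Three-value form: pays `a < b < d` with `a` at one state, `d` at another, `b` elsewhere. -/
def ThreeValueForm {Ω : Type*} (X : Ω → ℝ) : Prop :=
  ∃ (a b d : ℝ) (ωa ωd : Ω), a < b ∧ b < d ∧ ωa ≠ ωd ∧
    X ωa = a ∧ X ωd = d ∧ ∀ ω, ω ≠ ωa → ω ≠ ωd → X ω = b


lemma sum_pair_or {Ω : Type*} [Fintype Ω] (x y : Ω) (hxy : x ≠ y) (f : Ω → ℝ) :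
    ∑ ω, (if ω = x ∨ ω = y then f ω else 0) = f x + f y := by
  have h : ∀ ω, (if ω = x ∨ ω = y then f ω else 0)
      = (if ω = x then f ω else 0) + (if ω = y then f ω else 0) := by
    intro ω
    by_cases h1 : ω = x <;> by_cases h2 : ω = y <;> simp_all
  simp only [h, Finset.sum_add_distrib, Finset.sum_ite_eq', Finset.mem_univ, if_true]

lemma condExp_pair {Ω : Type*} [Fintype Ω] (μ X : Ω → ℝ) (x y : Ω) (hxy : x ≠ y) :
    condExp μ X ({x, y} : Set Ω) = (μ x * X x + μ y * X y) / (μ x + μ y) := by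
  unfold condExp
  simp only [Set.mem_insert_iff, Set.mem_singleton_iff]
  rw [sum_pair_or x y hxy, sum_pair_or x y hxy]

/-- for the `(a, d, b, d)` payoff structure, non-separability can
be arranged at a value `v` arbitrarily close to `d`. -/
theorem nonseparable_adbd_value_near_d {Ω : Type*} [Fintype Ω] (X : Ω → ℝ)
    (ω1 ω2 ω3 ω4 : Ω)
    (h12 : ω1 ≠ ω2) (h13 : ω1 ≠ ω3) (h14 : ω1 ≠ ω4)
    (h23 : ω2 ≠ ω3) (h24 : ω2 ≠ ω4) (h34 : ω3 ≠ ω4)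
    (a b d : ℝ)
    (hX1 : X ω1 = a) (hX2 : X ω2 = d) (hX3 : X ω3 = b) (hX4 : X ω4 = d)
    (habd : (d - a) * (d - b) > 0)
    (C1 C2 : Ω → Set Ω)
    (hC1 : C1 = fun ω => if ω = ω1 ∨ ω = ω2 then ({ω1, ω2} : Set Ω)
                 else if ω = ω3 ∨ ω = ω4 then ({ω3, ω4} : Set Ω) else {ω})
    (hC2 : C2 = fun ω => if ω = ω1 ∨ ω = ω4 then ({ω1, ω4} : Set Ω)
                 else if ω = ω2 ∨ ω = ω3 then ({ω2, ω3} : Set Ω) else {ω}) :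
    ∀ ε : ℝ, 0 < ε →
      ∃ (m p : ℝ) (μ : Ω → ℝ) (v : ℝ),
        0 < m ∧ m < 1 / 2 ∧ 0 < p ∧ p < 1 - 2 * m ∧
        μ = (fun ω => if ω = ω1 then p else if ω = ω2 then m
                 else if ω = ω3 then 1 - p - 2 * m
                 else if ω = ω4 then m else 0) ∧
        NonSeparableAt ![C1, C2] X μ v ∧ |v - d| < ε := by
  intro ε hε
  have hane : d - a ≠ 0 := by
    intro h; rw [h, zero_mul] at habd; exact lt_irrefl 0 habd
  have hbne : d - b ≠ 0 := by
    intro h; rw [h, mul_zero] at habd; exact lt_irrefl 0 habd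
  set α := |d - a| with hαdef
  set β := |d - b| with hβdef
  have hα : 0 < α := abs_pos.mpr hane
  have hβ : 0 < β := abs_pos.mpr hbne
  obtain ⟨σ, hσa, hσb, hσ2⟩ : ∃ σ : ℝ, σ * (d - a) = α ∧ σ * (d - b) = β ∧ σ * σ = 1 := by
    by_cases h : 0 < d - a
    · have hb : 0 < d - b := by nlinarith
      exact ⟨1, by rw [one_mul, hαdef, abs_of_pos h],
        by rw [one_mul, hβdef, abs_of_pos hb], by ring⟩
    · have ha' : d - a < 0 := lt_of_le_of_ne (not_lt.mp h) hane
      have hb' : d - b < 0 := by nlinarith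
      exact ⟨-1, by rw [hαdef, abs_of_neg ha']; ring,
        by rw [hβdef, abs_of_neg hb']; ring, by ring⟩
  set δ := min (ε / 2) (min (α / 2) (β / 2)) with hδdef
  have hδpos : 0 < δ := lt_min (half_pos hε) (lt_min (half_pos hα) (half_pos hβ))
  have hδε : δ < ε := lt_of_le_of_lt (min_le_left _ _) (half_lt_self hε)
  have hδα : δ < α :=
    lt_of_le_of_lt (le_trans (min_le_right _ _) (min_le_left _ _)) (half_lt_self hα)
  have hδβ : δ < β :=
    lt_of_le_of_lt (le_trans (min_le_right _ _) (min_le_right _ _)) (half_lt_self hβ)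
  set A := α - δ with hAdef
  set B := β - δ with hBdef
  have hA : 0 < A := by rw [hAdef]; linarith
  have hB : 0 < B := by rw [hBdef]; linarith
  set D := 2 + δ / A + δ / B with hDdef
  have hD : 2 < D := by
    have h1 : 0 < δ / A := div_pos hδpos hA
    have h2 : 0 < δ / B := div_pos hδpos hB
    rw [hDdef]; linarith
  have hD0 : 0 < D := by linarith
  set m := 1 / D with hmdef
  have hm : 0 < m := by rw [hmdef]; positivity
  have hmhalf : m < 1 / 2 := by
    rw [hmdef]; exact one_div_lt_one_div_of_lt (by norm_num) hD
  set p := m * δ / A with hpdef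
  have hp : 0 < p := by rw [hpdef]; positivity
  have hmD : m * D = 1 := by rw [hmdef]; field_simp
  have hq : 1 - p - 2 * m = m * δ / B := by
    rw [hDdef] at hmD
    rw [hpdef]
    field_simp
    field_simp at hmD
    linarith
  have hqpos : 0 < 1 - p - 2 * m := by rw [hq]; positivity
  set v := d - σ * δ with hvdef
  have hσ1 : σ = 1 ∨ σ = -1 := mul_self_eq_one_iff.mp hσ2
  have hvd : |v - d| < ε := by
    rw [hvdef]
    have : d - σ * δ - d = -(σ * δ) := by ring
    rw [this, abs_neg]
    rcases hσ1 with h | h <;> rw [h] <;>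
      simp [abs_of_pos hδpos, abs_of_neg (by linarith : -δ < 0)] <;> linarith
  have hda : d - a = σ * α := by linear_combination σ * hσa - (d - a) * hσ2
  have hdb : d - b = σ * β := by linear_combination σ * hσb - (d - b) * hσ2
  have hav : a - v = -(σ * A) := by rw [hvdef, hAdef]; linear_combination -hda
  have hbv : b - v = -(σ * B) := by rw [hvdef, hBdef]; linear_combination -hdb
  have hdv : d - v = σ * δ := by rw [hvdef]; ring
  have hpA : p * A = m * δ := by rw [hpdef]; field_simp
  have hqB : (1 - p - 2 * m) * B = m * δ := by rw [hq]; field_simp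
  have hnum1 : p * a + m * d = v * (p + m) := by
    linear_combination p * hav + m * hdv - σ * hpA
  have hnum2 : (1 - p - 2 * m) * b + m * d = v * ((1 - p - 2 * m) + m) := by
    linear_combination (1 - p - 2 * m) * hbv + m * hdv - σ * hqB
  have hpm : (0 : ℝ) < p + m := by linarith
  have hqm : (0 : ℝ) < (1 - p - 2 * m) + m := by linarith
  set μ : Ω → ℝ := fun ω => if ω = ω1 then p else if ω = ω2 then m
      else if ω = ω3 then 1 - p - 2 * m else if ω = ω4 then m else 0 with hμdef
  have hμ1 : μ ω1 = p := by simp [hμdef]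
  have hμ2 : μ ω2 = m := by simp [hμdef, Ne.symm h12]
  have hμ3 : μ ω3 = 1 - p - 2 * m := by simp [hμdef, Ne.symm h13, Ne.symm h23]
  have hμ4 : μ ω4 = m := by simp [hμdef, Ne.symm h14, Ne.symm h24, Ne.symm h34]
  have hE12 : condExp μ X ({ω1, ω2} : Set Ω) = v := by
    rw [condExp_pair μ X ω1 ω2 h12, hμ1, hμ2, hX1, hX2, hnum1,
      mul_div_cancel_right₀ _ hpm.ne']
  have hE34 : condExp μ X ({ω3, ω4} : Set Ω) = v := by
    rw [condExp_pair μ X ω3 ω4 h34, hμ3, hμ4, hX3, hX4, hnum2,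
      mul_div_cancel_right₀ _ hqm.ne']
  have hE14 : condExp μ X ({ω1, ω4} : Set Ω) = v := by
    rw [condExp_pair μ X ω1 ω4 h14, hμ1, hμ4, hX1, hX4, hnum1,
      mul_div_cancel_right₀ _ hpm.ne']
  have hE23 : condExp μ X ({ω2, ω3} : Set Ω) = v := by
    rw [condExp_pair μ X ω2 ω3 h23, hμ2, hμ3, hX2, hX3]
    rw [div_eq_iff (by linarith : m + (1 - p - 2 * m) ≠ 0)]
    linarith [hnum2]
  refine ⟨m, p, μ, v, hm, hmhalf, hp, by linarith, hμdef, ⟨⟨ω1, ?_, ?_⟩, ?_⟩, hvd⟩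
  · show 0 < μ ω1
    rw [hμ1]; exact hp
  · rw [hX1]
    intro h
    rw [h] at hav
    have h0 : σ * A = 0 := by linarith [hav]
    rcases mul_eq_zero.mp h0 with h' | h'
    · rw [h'] at hσ2; norm_num at hσ2
    · exact absurd h' hA.ne'
  · rintro i ω hω
    have hωmem : ω = ω1 ∨ ω = ω2 ∨ ω = ω3 ∨ ω = ω4 := by
      by_contra hcon
      push_neg at hcon
      obtain ⟨n1, n2, n3, n4⟩ := hcon
      have hz : μ ω = 0 := by simp [hμdef, n1, n2, n3, n4]
      have h0 : 0 < μ ω := hω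
      rw [hz] at h0; exact lt_irrefl 0 h0
    fin_cases i
    · change condExp μ X (C1 ω) = v
      rcases hωmem with h | h | h | h <;> rw [h]
      · have hc : C1 ω1 = {ω1, ω2} := by rw [hC1]; simp
        rw [hc]; exact hE12
      · have hc : C1 ω2 = {ω1, ω2} := by rw [hC1]; simp
        rw [hc]; exact hE12
      · have hc : C1 ω3 = {ω3, ω4} := by rw [hC1]; simp [Ne.symm h13, Ne.symm h23]
        rw [hc]; exact hE34
      · have hc : C1 ω4 = {ω3, ω4} := by rw [hC1]; simp [Ne.symm h14, Ne.symm h24]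
        rw [hc]; exact hE34
    · change condExp μ X (C2 ω) = v
      rcases hωmem with h | h | h | h <;> rw [h]
      · have hc : C2 ω1 = {ω1, ω4} := by rw [hC2]; simp
        rw [hc]; exact hE14
      · have hc : C2 ω2 = {ω2, ω3} := by rw [hC2]; simp [Ne.symm h12, h24]
        rw [hc]; exact hE23
      · have hc : C2 ω3 = {ω2, ω3} := by rw [hC2]; simp [Ne.symm h13, h34]
        rw [hc]; exact hE23
      · have hc : C2 ω4 = {ω1, ω4} := by rw [hC2]; simp
        rw [hc]; exact hE14
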